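/- arXiv:1503.01437 — 7 statements merged into one kernel-verified Lean document; each statement's English description precedes it below -/
import Mathlib

section
/- Let S be a semicopula. If for all measurable spaces (X,𝒜), all capacities μ, all measurable f : X → [0,1], and all a ∈ [0,1] the identity I_S(μ, S(a,f)) = S(a, I_S(μ,f)) holds, then S is associative: S(S(x,y),z) = S(x,S(y,z)) for all x,y,z ∈ [0,1]. -/
open unitInterval Set Filter Topology

instance : Fact ((0:ℝ) ≤ 1) := ⟨zero_le_one⟩

/-- A semicopula: nondecreasing in each coordinate, neutral element 1. -/
def IsSemicopula (S : I → I → I) : Prop :=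
  (∀ x, S x 1 = x) ∧ (∀ x, S 1 x = x) ∧
  (∀ y, Monotone fun x => S x y) ∧ (∀ x, Monotone fun y => S x y)

/-- A capacity: monotone set function with value 0 at ∅ and 1 at univ. -/
def IsCapacity {X : Type} [MeasurableSpace X] (μ : Set X → I) : Prop :=
  (∀ A B : Set X, MeasurableSet A → MeasurableSet B → A ⊆ B → μ A ≤ μ B) ∧
  μ (∅ : Set X) = 0 ∧ μ (univ : Set X) = 1

/-- The generalized Sugeno (seminormed fuzzy) integral. -/
noncomputable def sugeno {X : Type} [MeasurableSpace X] (S : I → I → I)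
    (μ : Set X → I) (f : X → I) : I :=
  ⨆ t : I, S t (μ {x | t ≤ f x})

theorem prop_implies_assoc (S : I → I → I) (hS : IsSemicopula S)
    (hprop : ∀ (X : Type) [MeasurableSpace X] (μ : Set X → I) (f : X → I),
      IsCapacity μ → Measurable f → ∀ a : I,
        sugeno S μ (fun x => S a (f x)) = S a (sugeno S μ f)) :
    ∀ x y z : I, S (S x y) z = S x (S y z) := by
  intro x y z
  classical
  obtain ⟨h1, h2, hm1, hm2⟩ := hS
  have hS0 : ∀ t : I, S t 0 = 0 := fun t =>
    le_antisymm (by simpa [h2] using hm1 0 (le_one' : t ≤ 1)) nonneg'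
  -- the capacity
  set μ : Set Bool → I := fun A => if A = univ then 1 else if true ∈ A then z else 0 with hμ
  have hcap : IsCapacity μ := by
    refine ⟨?_, ?_, ?_⟩
    · intro A B _ _ hAB
      by_cases hA : A = univ
      · have hB : B = univ := univ_subset_iff.mp (hA ▸ hAB)
        simp [hμ, hA, hB]
      · by_cases htA : true ∈ A
        · have htB : true ∈ B := hAB htA
          simp only [hμ]
          rw [if_neg hA, if_pos htA]
          by_cases hB : B = univ
          · rw [if_pos hB]; exact le_one'
          · rw [if_neg hB, if_pos htB]
        · simp only [hμ]
          rw [if_neg hA, if_neg htA]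
          exact nonneg'
    · simp only [hμ]
      rw [if_neg (Set.empty_ne_univ : (∅ : Set Bool) ≠ univ), if_neg (Set.notMem_empty true)]
    · simp only [hμ, if_true]
  -- key evaluation lemma
  have keyeval : ∀ w : I, sugeno S μ (fun b => if b then w else 0) = S w z := by
    intro w
    apply le_antisymm
    · apply iSup_le
      intro t
      by_cases ht0 : t = 0
      · subst ht0
        calc S 0 (μ {b | (0:I) ≤ if b then w else 0}) ≤ S 0 1 := hm2 0 le_one'
          _ = 0 := h1 0
          _ ≤ S w z := nonneg'
      · have ht0' : ¬ t ≤ 0 := fun h => ht0 (le_antisymm h nonneg')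
        by_cases htw : t ≤ w
        · have hset : {b : Bool | t ≤ if b then w else 0} = {true} := by
            ext b; cases b <;> simp [htw, ht0']
          have hne : ({true} : Set Bool) ≠ univ := by
            intro h
            have : false ∈ ({true} : Set Bool) := h ▸ mem_univ false
            simpa using this
          rw [hset]
          simp only [hμ, hne, if_false, Set.mem_singleton_iff, if_true]
          exact hm1 z htw
        · have hset : {b : Bool | t ≤ if b then w else 0} = ∅ := by
            ext b; cases b <;> simp [htw, ht0']
          rw [hset]
          have : μ ∅ = 0 := hcap.2.1
          rw [this, hS0]
          exact nonneg'
    · by_cases hw0 : w = 0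
      · have : S w z = 0 := by
          subst hw0
          exact le_antisymm (by simpa [h1] using hm2 0 (le_one' : z ≤ 1)) nonneg'
        rw [this]; exact nonneg'
      · have hw0' : ¬ w ≤ 0 := fun h => hw0 (le_antisymm h nonneg')
        have hset : {b : Bool | w ≤ if b then w else 0} = {true} := by
          ext b; cases b <;> simp [hw0']
        have hne : ({true} : Set Bool) ≠ univ := by
          intro h
          have : false ∈ ({true} : Set Bool) := h ▸ mem_univ false
          simpa using this
        have hterm : S w (μ {b : Bool | w ≤ if b then w else 0}) = S w z := by
          rw [hset]
          have : μ {true} = z := by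
            simp only [hμ]
            rw [if_neg hne, if_pos (Set.mem_singleton true)]
          rw [this]
        calc S w z = S w (μ {b : Bool | w ≤ if b then w else 0}) := hterm.symm
          _ ≤ ⨆ t : I, S t (μ {b : Bool | t ≤ if b then w else 0}) :=
            le_iSup (fun t : I => S t (μ {b : Bool | t ≤ if b then w else 0})) w
  have hf : Measurable (fun b : Bool => if b then y else 0) := measurable_of_finite _
  have hmain := hprop Bool μ (fun b => if b then y else 0) hcap hf x
  have hfun : (fun b : Bool => S x (if b then y else 0)) = fun b => if b then S x y else 0 := by
    funext b; cases b <;> simp [hS0]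
  rw [hfun] at hmain
  rw [keyeval y, keyeval (S x y)] at hmain
  exact hmain
end

section
/- Let S be a semicopula. If for all measurable spaces (X,𝒜), all capacities μ, all measurable f : X → [0,1], and all a ∈ [0,1] the identity I_S(μ, S(a,f)) = S(a, I_S(μ,f)) holds, then for each a ∈ (0,1) the map x ↦ S(a,x) is right-continuous on [0,1]. -/
/-!
Let `μ` be the capacity on `ℕ` that vanishes on finite sets and equals `1` on infinite ones; for it
the Sugeno integral of a sequence is its limit superior. For a sequence `uₙ ↓ x` the hypothesis
gives `infₙ S(a, uₙ) ≤ I_S(μ, S(a, u)) = S(a, I_S(μ, u)) = S(a, x)`, and for the monotone map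
`S(a, ·)` this bound on the infimum over points to the right of `x` is right-continuity at `x`.
-/

open unitInterval Set Filter Topology

namespace IsSemicopula

variable {S : I → I → I}

theorem apply_le_left (hS : IsSemicopula S) (t y : I) : S t y ≤ t :=
  (hS.2.2.2 t le_top).trans_eq (hS.1 t)

theorem apply_zero_right (hS : IsSemicopula S) (t : I) : S t 0 = 0 :=
  le_bot_iff.mp <| (hS.2.2.1 0 le_top).trans_eq (hS.2.1 0)

end IsSemicopula

section Sugeno

variable {X : Type} [MeasurableSpace X] {S : I → I → I} {μ : Set X → I} {f : X → I}

theorem le_sugeno_of_forall_le (hS : IsSemicopula S) (hμ : IsCapacity μ) {c : I}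
    (hc : ∀ x, c ≤ f x) : c ≤ sugeno S μ f := by
  have hlevel : {x | c ≤ f x} = univ := eq_univ_of_forall hc
  calc c = S c (μ {x | c ≤ f x}) := by rw [hlevel, hμ.2.2, hS.1]
    _ ≤ sugeno S μ f := le_iSup (fun t => S t (μ {x | t ≤ f x})) c

theorem sugeno_le_of_forall_lt (hS : IsSemicopula S) {c : I}
    (hc : ∀ t, c < t → μ {x | t ≤ f x} = 0) : sugeno S μ f ≤ c := by
  refine iSup_le fun t => ?_
  rcases le_or_gt t c with htc | hct
  · exact (hS.apply_le_left t _).trans htc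
  · rw [hc t hct, hS.apply_zero_right]
    exact bot_le

end Sugeno

open Classical in
noncomputable def cofiniteCapacity (X : Type) (A : Set X) : I :=
  if A.Finite then 0 else 1

section CofiniteCapacity

variable {X : Type} [MeasurableSpace X] [Infinite X]

theorem isCapacity_cofiniteCapacity : IsCapacity (cofiniteCapacity X) := by
  refine ⟨fun A B _ _ hAB => ?_, by simp [cofiniteCapacity],
    by simp [cofiniteCapacity, infinite_univ]⟩
  by_cases hB : B.Finite
  · simp [cofiniteCapacity, hB, hB.subset hAB]
  · rw [show cofiniteCapacity X B = 1 from if_neg hB]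
    exact le_top

theorem sugeno_cofiniteCapacity_of_tendsto {S : I → I → I} (hS : IsSemicopula S) {f : X → I}
    {x : I} (hxf : ∀ y, x ≤ f y) (hf : Tendsto f cofinite (𝓝 x)) :
    sugeno S (cofiniteCapacity X) f = x := by
  refine le_antisymm (sugeno_le_of_forall_lt hS fun t hxt => ?_)
    (le_sugeno_of_forall_le hS isCapacity_cofiniteCapacity hxf)
  have hfin : {y | t ≤ f y}.Finite := by
    simpa using eventually_cofinite.mp (hf.eventually (gt_mem_nhds hxt))
  simp [cofiniteCapacity, hfin]

end CofiniteCapacity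

theorem Monotone.continuousWithinAt_Ioi_of_forall_seq {α β : Type*} [LinearOrder α]
    [TopologicalSpace α] [OrderTopology α] [DenselyOrdered α] [FirstCountableTopology α]
    [CompleteLinearOrder β] [TopologicalSpace β] [OrderTopology β] {g : α → β}
    (hg : Monotone g) {x : α}
    (h : ∀ u : ℕ → α, (∀ n, x < u n) → Tendsto u atTop (𝓝 x) → ⨅ n, g (u n) ≤ g x) :
    ContinuousWithinAt g (Ioi x) x := by
  by_cases hmax : IsMax x
  · simp [ContinuousWithinAt, Ioi_eq_empty_iff.mpr hmax]
  obtain ⟨y, hxy⟩ := not_isMax_iff.mp hmax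
  obtain ⟨u, -, hu, hux⟩ := exists_seq_strictAnti_tendsto' hxy
  have hlim : sInf (g '' Ioi x) = g x := by
    refine le_antisymm ?_ (le_sInf (by rintro _ ⟨z, hz, rfl⟩; exact hg hz.le))
    calc sInf (g '' Ioi x) ≤ ⨅ n, g (u n) :=
          le_iInf fun n => sInf_le (mem_image_of_mem g (hu n).1)
      _ ≤ g x := h u (fun n => (hu n).1) hux
  exact (hlim ▸ hg.tendsto_nhdsGT x :)

theorem prop_implies_rightCont (S : I → I → I) (hS : IsSemicopula S)
    (hprop : ∀ (X : Type) [MeasurableSpace X] (μ : Set X → I) (f : X → I),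
      IsCapacity μ → Measurable f → ∀ a : I,
        sugeno S μ (fun x => S a (f x)) = S a (sugeno S μ f)) :
    ∀ a : I, 0 < a → a < 1 → ∀ x : I, ContinuousWithinAt (fun y => S a y) (Ici x) x := by
  intro a _ _ x
  rw [← continuousWithinAt_Ioi_iff_Ici]
  refine (hS.2.2.2 a).continuousWithinAt_Ioi_of_forall_seq fun u hxu hu => ?_
  have hμ : IsCapacity (cofiniteCapacity ℕ) := isCapacity_cofiniteCapacity
  rw [← Nat.cofinite_eq_atTop] at hu
  calc ⨅ n, S a (u n) ≤ sugeno S (cofiniteCapacity ℕ) (fun n => S a (u n)) :=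
        le_sugeno_of_forall_le hS hμ (iInf_le _)
    _ = S a (sugeno S (cofiniteCapacity ℕ) u) := hprop ℕ _ u hμ measurable_from_nat a
    _ = S a x := by rw [sugeno_cofiniteCapacity_of_tendsto hS (fun n => (hxu n).le) hu]
end

section
/- Let S be a semicopula. If for all measurable spaces (X,𝒜), all capacities μ, all measurable f : X → [0,1], and all a ∈ [0,1] the identity I_S(μ, S(a,f)) = S(a, I_S(μ,f)) holds, then for each a ∈ (0,1) the map x ↦ S(a,x) is left-continuous on [0,1]. -/
open unitInterval Set Filter Topology

/-!
Test the hypothesis on the capacity `μ A = 1` for nonempty `A`, `μ ∅ = 0`, on `X = [0, x)`,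
with `f` the inclusion. For this capacity the Sugeno integral of any function is its supremum,
so the hypothesis says `sup_{y < x} S(a, y) = S(a, sup_{y < x} y) = S(a, x)`: the left limit of
the monotone map `S(a, ·)` at `x` is its value there.
-/

open Classical in
noncomputable def nonemptyCapacity (X : Type) : Set X → I :=
  fun A => if A.Nonempty then 1 else 0

theorem isCapacity_nonemptyCapacity {X : Type} [MeasurableSpace X] [Nonempty X] :
    IsCapacity (nonemptyCapacity X) := by
  refine ⟨fun A B _ _ hAB => ?_, by simp [nonemptyCapacity], by simp [nonemptyCapacity]⟩
  by_cases hA : A.Nonempty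
  · simp [nonemptyCapacity, hA, hA.mono hAB]
  · simp [nonemptyCapacity, hA]

namespace IsSemicopula

variable {S : I → I → I}

open Classical in
theorem apply_nonemptyCapacity (hS : IsSemicopula S) {X : Type} (t : I) (A : Set X) :
    S t (nonemptyCapacity X A) = if A.Nonempty then t else 0 := by
  by_cases hA : A.Nonempty <;> simp [nonemptyCapacity, hA, hS.1, hS.apply_zero_right]

theorem sugeno_nonemptyCapacity (hS : IsSemicopula S) {X : Type} [MeasurableSpace X]
    (f : X → I) : sugeno S (nonemptyCapacity X) f = ⨆ x, f x := by
  refine le_antisymm (iSup_le fun t => ?_) (iSup_le fun x => ?_)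
  · rw [hS.apply_nonemptyCapacity]
    split_ifs with ht
    · obtain ⟨x, hx⟩ := ht
      exact hx.trans (le_iSup f x)
    · exact nonneg'
  · have hx : {y | f x ≤ f y}.Nonempty := ⟨x, le_refl (f x)⟩
    calc f x = S (f x) (nonemptyCapacity X {y | f x ≤ f y}) := by
          rw [hS.apply_nonemptyCapacity, if_pos hx]
      _ ≤ sugeno S (nonemptyCapacity X) f :=
          le_iSup (fun t => S t (nonemptyCapacity X {y | t ≤ f y})) (f x)

end IsSemicopula

theorem Monotone.continuousWithinAt_Iic_of_sSup_image_Iio {α β : Type*} [LinearOrder α]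
    [TopologicalSpace α] [OrderTopology α] [ConditionallyCompleteLinearOrder β]
    [TopologicalSpace β] [OrderTopology β] {f : α → β} (hf : Monotone f) {x : α}
    (h : sSup (f '' Iio x) = f x) : ContinuousWithinAt f (Iic x) x := by
  rw [← continuousWithinAt_Iio_iff_Iic, ContinuousWithinAt, ← h]
  exact hf.tendsto_nhdsLT x

theorem prop_implies_leftCont (S : I → I → I) (hS : IsSemicopula S)
    (hprop : ∀ (X : Type) [MeasurableSpace X] (μ : Set X → I) (f : X → I),
      IsCapacity μ → Measurable f → ∀ a : I,
        sugeno S μ (fun x => S a (f x)) = S a (sugeno S μ f)) :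
    ∀ a : I, 0 < a → a < 1 → ∀ x : I, ContinuousWithinAt (fun y => S a y) (Iic x) x := by
  intro a _ _ x
  have hleft : sSup ((fun y => S a y) '' Iio x) = S a x := by
    rcases eq_bot_or_bot_lt x with rfl | hx
    · rw [Iio_bot, image_empty, sSup_empty]
      exact (hS.apply_zero_right a).symm
    · have : Nonempty (Iio x) := ⟨⟨⊥, hx⟩⟩
      let _ : MeasurableSpace (Iio x) := ⊤
      have h := hprop (Iio x) (nonemptyCapacity _) (↑) isCapacity_nonemptyCapacity
        measurable_from_top a
      rwa [hS.sugeno_nonemptyCapacity, hS.sugeno_nonemptyCapacity, ← sSup_image', ← sSup_eq_iSup',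
        (Order.IsSuccPrelimit.of_dense x).sSup_Iio] at h
  exact (hS.2.2.2 a).continuousWithinAt_Iic_of_sSup_image_Iio hleft
end

section
/- Let S be an associative semicopula such that for each a ∈ (0,1), the map x ↦ S(a,x) is continuous on [0,1]. Then for every measurable space (X,𝒜), every capacity μ, every measurable f : X → [0,1], and every a ∈ [0,1]: S(a, I_S(μ, f)) = sup_{z∈[0,1]} S(S(a,z), μ({f ≥ z})). -/
open unitInterval Set Filter Topology

theorem rhs_eq_sup (S : I → I → I) (hS : IsSemicopula S)
    (hassoc : ∀ x y z : I, S (S x y) z = S x (S y z))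
    (hcont : ∀ a : I, 0 < a → a < 1 → Continuous fun x => S a x)
    (X : Type) [MeasurableSpace X] (μ : Set X → I) (hμ : IsCapacity μ)
    (f : X → I) (hf : Measurable f) (a : I) :
    S a (sugeno S μ f) = ⨆ z : I, S (S a z) (μ {x | z ≤ f x}) := by
  obtain ⟨h1, h1', hm1, hm2⟩ := hS
  unfold sugeno
  have key : S a (⨆ t : I, S t (μ {x | t ≤ f x})) = ⨆ z : I, S a (S z (μ {x | z ≤ f x})) := by
    rcases eq_or_lt_of_le (nonneg' : 0 ≤ a) with h0 | h0
    · have hz : ∀ x, S a x = 0 := by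
        intro x
        rw [← h0]
        have : S 0 x ≤ S 0 1 := hm2 0 le_one'
        rw [h1] at this
        exact le_antisymm this nonneg'
      simp [hz]
    rcases eq_or_lt_of_le (le_one' : a ≤ 1) with h1a | h1a
    · simp [h1a, h1']
    exact Monotone.map_ciSup_of_continuousAt ((hcont a h0 h1a).continuousAt) (hm2 a)
  rw [key]
  exact iSup_congr fun z => (hassoc a z _).symm
end

section
/- Let S be an associative semicopula such that for each a ∈ (0,1), the function x ↦ S(a,x) is continuous and piecewise of the form: constantly 0 on [0,z₀], increasing from 0 to a on [z₀,z₁], and constantly a on [z₁,1] (for some 0 ≤ z₀ < z₁ ≤ 1 possibly depending on a). Then for every measurable space (X,𝒜), capacity μ, measurable f : X → [0,1], and a ∈ [0,1]: I_S(μ, S(a,f)) = S(a, I_S(μ,f)). -/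
open unitInterval Set Filter Topology

theorem main_single_interval (S : I → I → I) (hS : IsSemicopula S)
    (hassoc : ∀ x y z : I, S (S x y) z = S x (S y z))
    (hshape : ∀ a : I, 0 < a → a < 1 →
      Continuous (fun x => S a x) ∧
      ∃ z₀ z₁ : I, z₀ < z₁ ∧
        (∀ x : I, x ≤ z₀ → S a x = 0) ∧
        StrictMonoOn (fun x => S a x) (Icc z₀ z₁) ∧
        (∀ x : I, z₁ ≤ x → S a x = a))
    (X : Type) [MeasurableSpace X] (μ : Set X → I) (hμ : IsCapacity μ)
    (f : X → I) (hf : Measurable f) (a : I) :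
    sugeno S μ (fun x => S a (f x)) = S a (sugeno S μ f) := by
  obtain ⟨hn1, h1n, hm1, hm2⟩ := hS
  obtain ⟨hμmono, hμ0, hμ1⟩ := hμ
  have hS0l : ∀ y : I, S 0 y = 0 := fun y =>
    le_antisymm (by simpa [hn1] using hm2 0 (le_one' : y ≤ 1)) nonneg'
  have hS0r : ∀ y : I, S y 0 = 0 := fun y =>
    le_antisymm (by simpa [h1n] using hm1 0 (le_one' : y ≤ 1)) nonneg'
  have hAmeas : ∀ t : I, MeasurableSet {x | t ≤ f x} := by
    intro t
    have : {x | t ≤ f x} = f ⁻¹' (Ici t) := rfl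
    rw [this]
    exact hf measurableSet_Ici
  rcases eq_or_lt_of_le (nonneg' : (0:I) ≤ a) with ha0 | ha0
  · -- a = 0 : both sides are 0
    have ha : a = 0 := ha0.symm
    subst ha
    have hRHS : S 0 (sugeno S μ f) = 0 := hS0l _
    rw [hRHS]
    refine le_antisymm (iSup_le fun t => ?_) nonneg'
    rcases eq_or_lt_of_le (nonneg' : (0:I) ≤ t) with ht0 | ht0
    · have ht : t = 0 := ht0.symm
      subst ht
      simp only [hS0l]
      exact le_rfl
    · have hset : {x | t ≤ S 0 (f x)} = (∅ : Set X) := by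
        ext x
        simp only [mem_setOf_eq, mem_empty_iff_false, iff_false, not_le, hS0l]
        exact ht0
      rw [hset, hμ0, hS0r]
  rcases eq_or_lt_of_le (le_one' : a ≤ 1) with ha1 | ha1
  · -- a = 1 : S 1 x = x
    subst ha1
    simp only [h1n]
  -- main case 0 < a < 1
  obtain ⟨hcont, z₀, z₁, hz01, hzero, hstrict, htop⟩ := hshape a ha0 ha1
  have hSaz0 : S a z₀ = 0 := hzero z₀ le_rfl
  have hSaz1 : S a z₁ = a := htop z₁ le_rfl
  have hSa_le : ∀ y : I, S a y ≤ a := fun y => by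
    simpa [hn1] using hm2 a (le_one' : y ≤ 1)
  -- key structural lemma
  have keylem : ∀ u : I, 0 < u → u ≤ a →
      ∃ s : I, z₀ < s ∧ s ≤ z₁ ∧ S a s = u ∧
        {x | u ≤ S a (f x)} = {x | s ≤ f x} := by
    intro u hu hua
    have hmem : u ∈ Icc (S a z₀) (S a z₁) := by
      rw [hSaz0, hSaz1]; exact ⟨nonneg', hua⟩
    obtain ⟨s, hs, hsa'⟩ := intermediate_value_Icc hz01.le hcont.continuousOn hmem
    have hsa : S a s = u := hsa'
    have hs0 : z₀ < s := by
      rcases eq_or_lt_of_le hs.1 with h | h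
      · exfalso
        rw [← h, hSaz0] at hsa
        exact hu.ne hsa
      · exact h
    refine ⟨s, hs0, hs.2, hsa, ?_⟩
    ext x
    simp only [mem_setOf_eq]
    constructor
    · intro h
      by_contra hns
      push_neg at hns
      rcases le_or_gt (f x) z₀ with hfx | hfx
      · rw [hzero (f x) hfx] at h
        exact absurd (lt_of_lt_of_le hu h) (lt_irrefl 0)
      · have hfx1 : f x ∈ Icc z₀ z₁ := ⟨hfx.le, hns.le.trans hs.2⟩
        have : S a (f x) < S a s := hstrict hfx1 hs hns
        rw [hsa] at this
        exact absurd (lt_of_le_of_lt h this) (lt_irrefl _)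
    · intro h
      calc u = S a s := hsa.symm
        _ ≤ S a (f x) := hm2 a h
  -- LHS ≤ RHS, per-term
  have key1 : ∀ t : I, S t (μ {x | t ≤ S a (f x)}) ≤ S a (sugeno S μ f) := by
    intro t
    rcases eq_or_lt_of_le (nonneg' : (0:I) ≤ t) with ht0 | ht0
    · rw [← ht0, hS0l]; exact nonneg'
    rcases le_or_gt t a with hta | hta
    · obtain ⟨s, _, _, hsa, hset⟩ := keylem t ht0 hta
      rw [hset, ← hsa, hassoc]
      exact hm2 a (le_iSup (fun s => S s (μ {x | s ≤ f x})) s)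
    · have hset : {x | t ≤ S a (f x)} = (∅ : Set X) := by
        ext x
        simp only [mem_setOf_eq, mem_empty_iff_false, iff_false, not_le]
        exact lt_of_le_of_lt (hSa_le (f x)) hta
      rw [hset, hμ0, hS0r]
      exact nonneg'
  -- RHS ≤ LHS, per-term
  have key2 : ∀ t : I, S (S a t) (μ {x | t ≤ f x}) ≤
      sugeno S μ (fun x => S a (f x)) := by
    intro t
    rcases eq_or_lt_of_le (nonneg' : (0:I) ≤ S a t) with hu0 | hu0
    · rw [← hu0, hS0l]; exact nonneg'
    obtain ⟨s, hs0, hs1, hsa, hset⟩ := keylem (S a t) hu0 (hSa_le t)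
    have hst : s ≤ t := by
      by_contra h
      push_neg at h
      rcases le_or_gt t z₀ with htz | htz
      · rw [hzero t htz] at hu0
        exact absurd hu0 (lt_irrefl 0)
      · have ht1 : t ∈ Icc z₀ z₁ := ⟨htz.le, h.le.trans hs1⟩
        have : S a t < S a s := hstrict ht1 ⟨hs0.le, hs1⟩ h
        rw [hsa] at this
        exact absurd this (lt_irrefl _)
    have hsub : {x | t ≤ f x} ⊆ {x | s ≤ f x} := fun x hx => hst.trans hx
    calc S (S a t) (μ {x | t ≤ f x})
        ≤ S (S a t) (μ {x | s ≤ f x}) :=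
          hm2 _ (hμmono _ _ (hAmeas t) (hAmeas s) hsub)
      _ = S (S a t) (μ {x | S a t ≤ S a (f x)}) := by rw [hset]
      _ ≤ ⨆ u : I, S u (μ {x | u ≤ S a (f x)}) :=
          le_iSup (fun u => S u (μ {x | u ≤ S a (f x)})) (S a t)
  refine le_antisymm (iSup_le key1) ?_
  have hmap : S a (⨆ t : I, S t (μ {x | t ≤ f x})) =
      ⨆ t : I, S a (S t (μ {x | t ≤ f x})) := by
    exact Monotone.map_ciSup_of_continuousAt hcont.continuousAt (hm2 a)
  show S a (⨆ t : I, S t (μ {x | t ≤ f x})) ≤ _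
  rw [hmap]
  refine iSup_le fun t => ?_
  rw [← hassoc]
  exact key2 t
end

section
/- For the Łukasiewicz t-norm S_L(a,b) = max(a+b−1,0): for every capacity μ on a measurable space (X,𝒜), every measurable f : X → [0,1], and every a ∈ [0,1], I_{S_L}(μ, S_L(a,f)) = S_L(a, I_{S_L}(μ,f)). -/
open unitInterval Set Filter Topology

noncomputable def lukasiewicz (a b : I) : I :=
  ⟨max (a.1 + b.1 - 1) 0,
    le_max_right _ _,
    max_le (by have := a.2.2; have := b.2.2; linarith) zero_le_one⟩
/-!
Since `lukasiewicz a` has the right adjoint `b ↦ min 1 (1 - a + b)`, it commutes with suprema,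
and associativity turns `S_L(a, I(μ, f))` into `⨆ s, S_L(S_L(a, s), μ {s ≤ f})`. Reindexing by
`t = S_L(a, s)` matches this with the integral of `S_L(a, f)`: for `t > 0` the level sets
`{t ≤ S_L(a, f)}` and `{s ≤ f}` coincide, the level `t = 0` contributes nothing, and levels
`t > a` have empty level sets, which contribute `S_L(t, μ ∅) = 0`.
-/

lemma coe_lukasiewicz (a b : I) : (lukasiewicz a b : ℝ) = max ((a : ℝ) + b - 1) 0 := rfl

lemma lukasiewicz_zero_left (b : I) : lukasiewicz 0 b = 0 :=
  Subtype.ext <| max_eq_right <| by simp [b.2.2]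

lemma lukasiewicz_zero_right (a : I) : lukasiewicz a 0 = 0 :=
  Subtype.ext <| max_eq_right <| by simp [a.2.2]

lemma lukasiewicz_le_left (a b : I) : lukasiewicz a b ≤ a :=
  Subtype.coe_le_coe.mp <| max_le (by linarith [b.2.2]) a.2.1

lemma lukasiewicz_assoc (a b c : I) :
    lukasiewicz (lukasiewicz a b) c = lukasiewicz a (lukasiewicz b c) := by
  apply Subtype.ext
  simp only [coe_lukasiewicz]
  grind [a.2.2, b.2.2, c.2.2, c.2.1, a.2.1]

lemma lukasiewicz_le_lukasiewicz_iff_of_pos {a s y : I} (h : 0 < lukasiewicz a s) :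
    lukasiewicz a s ≤ lukasiewicz a y ↔ s ≤ y := by
  have hpos : (0 : ℝ) < a + s - 1 := by
    simpa [← Subtype.coe_lt_coe, coe_lukasiewicz] using h
  rw [← Subtype.coe_le_coe, ← Subtype.coe_le_coe, coe_lukasiewicz, coe_lukasiewicz,
    max_eq_left hpos.le, le_max_iff]
  constructor
  · rintro (h' | h') <;> linarith
  · exact fun h' => Or.inl (by linarith)

lemma exists_lukasiewicz_eq {a t : I} (ht : t ≤ a) : ∃ s, lukasiewicz a s = t := by
  refine ⟨⟨t + 1 - a, by linarith [a.2.2, t.2.1], by linarith [Subtype.coe_le_coe.mpr ht]⟩, ?_⟩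
  exact Subtype.ext <| by simp [coe_lukasiewicz, t.2.1]

noncomputable def lukasiewiczResiduum (a b : I) : I :=
  ⟨min 1 (1 - a + b), le_min zero_le_one (by linarith [a.2.2, b.2.1]), min_le_left _ _⟩

lemma gc_lukasiewicz_lukasiewiczResiduum (a : I) :
    GaloisConnection (lukasiewicz a) (lukasiewiczResiduum a) := by
  intro b c
  rw [← Subtype.coe_le_coe, ← Subtype.coe_le_coe, coe_lukasiewicz]
  simp only [lukasiewiczResiduum, max_le_iff, le_min_iff, b.2.2, c.2.1, true_and, and_true]
  constructor <;> intro h <;> linarith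

lemma lukasiewicz_iSup {ι : Sort*} (a : I) (g : ι → I) :
    lukasiewicz a (⨆ i, g i) = ⨆ i, lukasiewicz a (g i) :=
  (gc_lukasiewicz_lukasiewiczResiduum a).l_iSup

lemma setOf_lukasiewicz_le_eq_of_pos {X : Type} (f : X → I) {a s : I}
    (h : 0 < lukasiewicz a s) :
    {x | lukasiewicz a s ≤ lukasiewicz a (f x)} = {x | s ≤ f x} := by
  simp only [lukasiewicz_le_lukasiewicz_iff_of_pos h]

section Sugeno

variable {X : Type} [MeasurableSpace X] (μ : Set X → I) (f : X → I) (a : I)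

lemma lukasiewicz_sugeno_eq_iSup :
    lukasiewicz a (sugeno lukasiewicz μ f) =
      ⨆ s, lukasiewicz (lukasiewicz a s) (μ {x | s ≤ f x}) := by
  simp only [sugeno, lukasiewicz_iSup, lukasiewicz_assoc]

lemma iSup_le_sugeno_lukasiewicz_comp :
    ⨆ s, lukasiewicz (lukasiewicz a s) (μ {x | s ≤ f x}) ≤
      sugeno lukasiewicz μ (fun x => lukasiewicz a (f x)) := by
  refine iSup_le fun s => ?_
  rcases (nonneg' : 0 ≤ lukasiewicz a s).eq_or_lt with h | h
  · rw [← h, lukasiewicz_zero_left]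
    exact nonneg'
  · rw [← setOf_lukasiewicz_le_eq_of_pos f h]
    exact le_iSup_of_le (lukasiewicz a s) le_rfl

lemma sugeno_lukasiewicz_comp_le_iSup (hμ : μ ∅ = 0) :
    sugeno lukasiewicz μ (fun x => lukasiewicz a (f x)) ≤
      ⨆ s, lukasiewicz (lukasiewicz a s) (μ {x | s ≤ f x}) := by
  refine iSup_le fun t => ?_
  by_cases hta : t ≤ a
  · obtain ⟨s, rfl⟩ := exists_lukasiewicz_eq hta
    rcases (nonneg' : 0 ≤ lukasiewicz a s).eq_or_lt with h | h
    · rw [← h, lukasiewicz_zero_left]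
      exact nonneg'
    · rw [setOf_lukasiewicz_le_eq_of_pos f h]
      exact le_iSup_of_le s le_rfl
  · have hempty : {x | t ≤ lukasiewicz a (f x)} = ∅ :=
      Set.eq_empty_of_forall_notMem fun x hx => hta (hx.trans (lukasiewicz_le_left _ _))
    rw [hempty, hμ, lukasiewicz_zero_right]
    exact nonneg'

end Sugeno

theorem lukasiewicz_property_general (X : Type) [MeasurableSpace X]
    (μ : Set X → I) (hμ : IsCapacity μ) (f : X → I) (a : I) :
    sugeno lukasiewicz μ (fun x => lukasiewicz a (f x))
      = lukasiewicz a (sugeno lukasiewicz μ f) := by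
  rw [lukasiewicz_sugeno_eq_iSup]
  exact le_antisymm (sugeno_lukasiewicz_comp_le_iSup μ f a hμ.2.1)
    (iSup_le_sugeno_lukasiewicz_comp μ f a)

theorem lukasiewicz_property (X : Type) [MeasurableSpace X]
    (μ : Set X → I) (hμ : IsCapacity μ) (f : X → I) (hf : Measurable f) (a : I) :
    sugeno lukasiewicz μ (fun x => lukasiewicz a (f x))
      = lukasiewicz a (sugeno lukasiewicz μ f) :=
  lukasiewicz_property_general X μ hμ f a
end

section
/- Let S be an associative semicopula such that for each a ∈ (0,1) the map x ↦ S(a,x) is increasing, left-continuous, and has exactly one discontinuity point z = z(a) ∈ (0,1), with continuity on some interval (z, z+ε). Then for every measurable space (X,𝒜), every capacity μ that is continuous from below, every measurable f : X → [0,1], and every a ∈ [0,1]: I_S(μ, S(a,f)) = S(a, I_S(μ,f)). -/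
open unitInterval Set Filter Topology

/-- A left-continuous map applied to a sup is bounded by any common
bound of the images. -/
lemma lc_sup_le {g : I → I} {w : I → I}
    (hg : ContinuousWithinAt g (Iic (⨆ t, w t)) (⨆ t, w t))
    {L : I} (hle : ∀ t, g (w t) ≤ L) : g (⨆ t, w t) ≤ L := by
  set c := ⨆ t, w t with hc
  have hlub : IsLUB (range w) c := isLUB_iSup
  have hcl : c ∈ closure (range w) := hlub.mem_closure (range_nonempty w)
  have hne : (𝓝[range w] c).NeBot := mem_closure_iff_nhdsWithin_neBot.mp hcl
  have hsub : range w ⊆ Iic c := by rintro _ ⟨t, rfl⟩; exact le_iSup w t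
  have htend : Tendsto g (𝓝[range w] c) (𝓝 (g c)) :=
    hg.mono_left (nhdsWithin_mono _ hsub)
  exact le_of_tendsto htend
    (eventually_nhdsWithin_of_forall (by rintro _ ⟨t, rfl⟩; exact hle t))

theorem main_one_discontinuity (S : I → I → I) (hS : IsSemicopula S)
    (hassoc : ∀ x y z : I, S (S x y) z = S x (S y z))
    (hshape : ∀ a : I, 0 < a → a < 1 →
      StrictMono (fun x => S a x) ∧
      (∀ x : I, ContinuousWithinAt (fun y => S a y) (Iic x) x) ∧
      ∃ z : I, 0 < z ∧ z < 1 ∧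
        ¬ ContinuousAt (fun y => S a y) z ∧
        (∀ x : I, x ≠ z → ContinuousAt (fun y => S a y) x) ∧
        ∃ ε : ℝ, 0 < ε ∧
          ContinuousOn (fun y => S a y) {x : I | (z : ℝ) < x ∧ (x : ℝ) < z + ε})
    (X : Type) [MeasurableSpace X] (μ : Set X → I) (hμ : IsCapacity μ)
    (hbelow : ∀ A : ℕ → Set X, (∀ n, MeasurableSet (A n)) → (∀ n, A n ⊆ A (n + 1)) →
      Tendsto (fun n => μ (A n)) atTop (nhds (μ (⋃ n, A n))))
    (f : X → I) (hf : Measurable f) (a : I) :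
    sugeno S μ (fun x => S a (f x)) = S a (sugeno S μ f) := by
  obtain ⟨hS1, hS2, hm1, hm2⟩ := hS
  obtain ⟨hμm, hμ0, hμ1⟩ := hμ
  -- trivial case a = 1
  by_cases ha1 : a = 1
  · subst ha1
    have hfun : (fun x => S 1 (f x)) = f := funext fun x => hS2 (f x)
    rw [hfun, hS2]
  -- trivial case a = 0
  by_cases ha0 : a = 0
  · subst ha0
    have hz : ∀ y : I, S 0 y = 0 := by
      intro y
      refine le_antisymm ?_ nonneg'
      have h := hm2 0 (le_one' : y ≤ 1)
      simp only [hS1] at h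
      exact h
    rw [hz]
    refine le_antisymm ?_ nonneg'
    rw [sugeno]
    apply iSup_le
    intro t
    rcases eq_or_lt_of_le (nonneg' : (0:I) ≤ t) with h | h
    · have hset : {x : X | t ≤ S 0 (f x)} = univ := by
        refine eq_univ_of_forall fun x => ?_
        show t ≤ S 0 (f x)
        rw [hz]
        exact le_of_eq h.symm
      rw [hset, hμ1, hS1]
      exact le_of_eq h.symm
    · have hset : {x : X | t ≤ S 0 (f x)} = (∅ : Set X) := by
        refine eq_empty_iff_forall_notMem.mpr fun x hx => ?_
        rw [mem_setOf_eq, hz] at hx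
        exact absurd hx (not_le.mpr h)
      rw [hset, hμ0]
      have h10 := hm1 0 (le_one' : t ≤ 1)
      simp only [hS2] at h10
      exact h10
  -- main case 0 < a < 1
  have ha0' : 0 < a := lt_of_le_of_ne nonneg' (Ne.symm ha0)
  have ha1' : a < 1 := lt_of_le_of_ne le_one' ha1
  obtain ⟨-, halc, -⟩ := hshape a ha0' ha1'
  simp only [sugeno]
  set w : I → I := fun t => S t (μ {x | t ≤ f x}) with hwdef
  set c : I := ⨆ t, w t with hcdef
  have hbound : ∀ s : I, S s (μ {x | s ≤ f x}) ≤ c := fun s => le_iSup w s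
  have hmeasI : ∀ s : I, MeasurableSet {x : X | s ≤ f x} := by
    intro s
    exact hf measurableSet_Ici
  -- upper bound: each term of LHS is ≤ S a c
  have hterm : ∀ t : I, S t (μ {x | t ≤ S a (f x)}) ≤ S a c := by
    intro t
    by_cases h1 : t ≤ S a 0
    · have hset : {x : X | t ≤ S a (f x)} = univ :=
        eq_univ_of_forall fun x => h1.trans (hm2 a nonneg')
      rw [hset, hμ1, hS1]
      exact h1.trans (hm2 a nonneg')
    push_neg at h1
    by_cases h2 : a < t
    · have hset : {x : X | t ≤ S a (f x)} = (∅ : Set X) := by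
        refine eq_empty_iff_forall_notMem.mpr fun x hx => ?_
        rw [mem_setOf_eq] at hx
        have h := hm2 a (le_one' : f x ≤ 1)
        simp only [hS1] at h
        exact absurd ((hx.trans h).trans_lt h2) (lt_irrefl t)
      rw [hset, hμ0]
      have h10 := hm1 0 (le_one' : t ≤ 1)
      simp only [hS2] at h10
      exact h10.trans nonneg'
    push_neg at h2
    have ht0 : 0 < t := lt_of_le_of_lt nonneg' h1
    have ht1 : t < 1 := lt_of_le_of_lt h2 ha1'
    obtain ⟨-, htlc, -⟩ := hshape t ht0 ht1
    set U : Set I := {y | t ≤ S a y} with hUdef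
    have hU1 : (1:I) ∈ U := by
      show t ≤ S a 1
      rw [hS1]; exact h2
    set s := sInf U with hsdef
    have hsle : ∀ y ∈ U, s ≤ y := fun y hy => sInf_le hy
    have hUup : ∀ y : I, s < y → y ∈ U := by
      intro y hy
      have hex : ∃ u ∈ U, u < y := by
        by_contra h
        push_neg at h
        exact absurd (le_sInf h) (not_le.mpr hy)
      obtain ⟨u, hu, huy⟩ := hex
      show t ≤ S a y
      exact le_trans hu (hm2 a huy.le)
    by_cases h3 : t ≤ S a s
    · have hset : {x : X | t ≤ S a (f x)} = {x : X | s ≤ f x} := by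
        ext x
        simp only [mem_setOf_eq]
        exact ⟨fun hx => hsle _ hx, fun hx => h3.trans (hm2 a hx)⟩
      rw [hset]
      calc S t (μ {x | s ≤ f x}) ≤ S (S a s) (μ {x | s ≤ f x}) := hm1 _ h3
        _ = S a (S s (μ {x | s ≤ f x})) := hassoc a s _
        _ ≤ S a c := hm2 a (hbound s)
    · push_neg at h3
      have hs1 : s < 1 := by
        rcases lt_or_eq_of_le (le_one' : s ≤ 1) with h | h
        · exact h
        · exfalso
          rw [h, hS1] at h3
          exact absurd h2 (not_le.mpr h3)
      have hs1R : (s : ℝ) < 1 := by exact_mod_cast hs1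
      have hs0R : (0 : ℝ) ≤ (s : ℝ) := s.2.1
      -- a decreasing sequence approaching s from above
      have hmem : ∀ n : ℕ, (s : ℝ) + (1 - (s:ℝ)) / (n + 1) ∈ Icc (0:ℝ) 1 := by
        intro n
        constructor
        · have h1' : (0:ℝ) ≤ (1 - (s:ℝ)) / (n + 1) :=
            div_nonneg (by linarith) (by positivity)
          linarith
        · have hle : (1 - (s:ℝ)) / (n + 1) ≤ 1 - (s:ℝ) := by
            apply div_le_self (by linarith)
            have : (0:ℝ) < (n:ℝ) + 1 := by positivity
            linarith
          linarith
      set sq : ℕ → I := fun n => ⟨(s : ℝ) + (1 - (s:ℝ)) / (n + 1), hmem n⟩ with hsqdef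
      have hlt : ∀ n, s < sq n := by
        intro n
        rw [← Subtype.coe_lt_coe]
        show (s:ℝ) < (s:ℝ) + (1 - (s:ℝ)) / (n + 1)
        have : (0:ℝ) < (1 - (s:ℝ)) / (n + 1) := div_pos (by linarith) (by positivity)
        linarith
      have hanti : ∀ n, sq (n+1) ≤ sq n := by
        intro n
        rw [← Subtype.coe_le_coe]
        show (s:ℝ) + (1 - (s:ℝ)) / (((n+1:ℕ):ℝ) + 1) ≤ (s:ℝ) + (1 - (s:ℝ)) / ((n:ℝ) + 1)
        have hc : ((n+1:ℕ):ℝ) = (n:ℝ) + 1 := by push_cast; ring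
        rw [hc]
        have h := div_le_div_of_nonneg_left (by linarith : (0:ℝ) ≤ 1 - (s:ℝ))
          (by positivity : (0:ℝ) < (n:ℝ) + 1) (by linarith : (n:ℝ) + 1 ≤ (n:ℝ) + 1 + 1)
        linarith
      set A : ℕ → Set X := fun n => {x | sq n ≤ f x} with hAdef
      have hAmeas : ∀ n, MeasurableSet (A n) := fun n => hmeasI (sq n)
      have hAmono : ∀ n, A n ⊆ A (n + 1) := by
        intro n x hx
        exact le_trans (hanti n) hx
      have hAsub : ∀ n, A n ⊆ {x | s < f x} := by
        intro n x hx
        exact lt_of_lt_of_le (hlt n) hx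
      have hUnion : (⋃ n, A n) = {x | s < f x} := by
        apply subset_antisymm
        · exact iUnion_subset hAsub
        · intro x hx
          rw [mem_setOf_eq, ← Subtype.coe_lt_coe] at hx
          have hd : (0:ℝ) < (f x : ℝ) - s := by linarith
          obtain ⟨n, hn⟩ := exists_nat_gt ((1 - (s:ℝ)) / ((f x : ℝ) - s))
          refine mem_iUnion.mpr ⟨n, ?_⟩
          show sq n ≤ f x
          rw [← Subtype.coe_le_coe]
          show (s:ℝ) + (1 - (s:ℝ)) / (n + 1) ≤ (f x : ℝ)
          have hn1 : (1 - (s:ℝ)) / ((f x : ℝ) - s) < (n:ℝ) + 1 := hn.trans (lt_add_one _)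
          rw [div_lt_iff₀ hd] at hn1
          have hpos : (0:ℝ) < (n:ℝ) + 1 := by positivity
          have hkey : (1 - (s:ℝ)) / (n + 1) ≤ (f x : ℝ) - s := by
            rw [div_le_iff₀ hpos]
            nlinarith
          linarith
      have hset : {x : X | t ≤ S a (f x)} = {x | s < f x} := by
        ext x
        simp only [mem_setOf_eq]
        constructor
        · intro hx
          have hmemU : f x ∈ U := hx
          rcases lt_or_eq_of_le (hsle _ hmemU) with h | h
          · exact h
          · exfalso
            rw [← h] at hmemU
            exact absurd hmemU (not_le.mpr h3)
        · intro hx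
          exact hUup (f x) hx
      have hμtend : Tendsto (fun n => μ (A n)) atTop (𝓝 (μ {x | s < f x})) := by
        have h := hbelow A hAmeas hAmono
        rwa [hUnion] at h
      have hBmeas : MeasurableSet {x : X | s < f x} := hf measurableSet_Ioi
      have hμle : ∀ n, μ (A n) ≤ μ {x | s < f x} :=
        fun n => hμm _ _ (hAmeas n) hBmeas (hAsub n)
      have hwithin : Tendsto (fun n => μ (A n)) atTop
          (𝓝[Iic (μ {x | s < f x})] (μ {x | s < f x})) := by
        apply tendsto_nhdsWithin_of_tendsto_nhds_of_eventually_within _ hμtend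
        exact Eventually.of_forall hμle
      have hcomp : Tendsto (fun n => S t (μ (A n))) atTop (𝓝 (S t (μ {x | s < f x}))) :=
        Tendsto.comp (htlc (μ {x | s < f x})) hwithin
      have hbnd : ∀ n, S t (μ (A n)) ≤ S a c := by
        intro n
        have htn : t ≤ S a (sq n) := hUup (sq n) (hlt n)
        calc S t (μ (A n)) ≤ S (S a (sq n)) (μ (A n)) := hm1 _ htn
          _ = S a (S (sq n) (μ (A n))) := hassoc a (sq n) _
          _ ≤ S a c := hm2 a (hbound (sq n))
      rw [hset]
      exact le_of_tendsto hcomp (Eventually.of_forall hbnd)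
  -- lower bound
  have hrev : S a c ≤ ⨆ t : I, S t (μ {x | t ≤ S a (f x)}) := by
    have hle : ∀ t : I, S a (w t) ≤ ⨆ t : I, S t (μ {x | t ≤ S a (f x)}) := by
      intro t
      have hmono' : {x : X | t ≤ f x} ⊆ {x : X | S a t ≤ S a (f x)} :=
        fun x hx => hm2 a hx
      have hmeas2 : MeasurableSet {x : X | S a t ≤ S a (f x)} := by
        have hg : Measurable (fun x => S a (f x)) := ((hm2 a).measurable).comp hf
        exact hg measurableSet_Ici
      calc S a (w t) = S (S a t) (μ {x | t ≤ f x}) := (hassoc a t _).symm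
        _ ≤ S (S a t) (μ {x | S a t ≤ S a (f x)}) :=
            hm1 _ (le_refl _) |>.trans (hm2 _ (hμm _ _ (hmeasI t) hmeas2 hmono'))
        _ ≤ ⨆ t : I, S t (μ {x | t ≤ S a (f x)}) := le_iSup (fun t : I => S t (μ {x | t ≤ S a (f x)})) (S a t)
    exact lc_sup_le (halc c) hle
  exact le_antisymm (iSup_le hterm) hrev
end
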